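/- If π(i,m) is a j-play on a basic tile τ which is j-end, π(i,n) is a play on τ and n ≥ m, then n = m. -/

import Mathlib

set_option autoImplicit false

/-! ## Simple types over a single base type -/

inductive Ty : Type
  | base : Ty
  | arr : Ty → Ty → Ty
  deriving DecidableEq

/-- The order of a simple type. -/
def Ty.order : Ty → ℕ
  | .base => 1
  | .arr A B => max (A.order + 1) B.order

/-- The number of top-level arguments (the width) of a type. -/
def Ty.arity : Ty → ℕ
  | .base => 0
  | .arr _ B => B.arity + 1

/-- The argument types `A₁,…,Aₙ` of `(A₁,…,Aₙ,0)`. -/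
def Ty.args : Ty → List Ty
  | .base => []
  | .arr A B => A :: B.args

/-- The largest width of any subtype of a type. -/
def Ty.subWidth : Ty → ℕ
  | .base => 0
  | .arr A B => max (Ty.arity (.arr A B)) (max A.subWidth B.subWidth)

/-! ## Simply typed λ-terms with named, typed variables and constants -/

inductive Tm : Type
  | var : ℕ → Ty → Tm
  | const : ℕ → Ty → Tm
  | lam : ℕ → Ty → Tm → Tm
  | app : Tm → Tm → Tm
  deriving DecidableEq

namespace Tm

/-- The type of a term (if well-typed). -/
def ty? : Tm → Option Ty
  | .var _ A => some A
  | .const _ A => some A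
  | .lam _ A t => (ty? t).map (Ty.arr A)
  | .app s t =>
      match ty? s with
      | some (Ty.arr A B) => if ty? t = some A then some B else none
      | _ => none

/-- The free variables (name/type pairs). -/
def free : Tm → Set (ℕ × Ty)
  | .var x A => {(x, A)}
  | .const _ _ => ∅
  | .lam x A t => free t \ {(x, A)}
  | .app s t => free s ∪ free t

def Closed (t : Tm) : Prop := t.free = ∅

/-- `z` occurs free in `t`. -/
def freeName (t : Tm) (z : ℕ) : Prop := ∃ B, (z, B) ∈ t.free

/-- A binder `λz` occurs in `t`. -/
def bindsVar : Tm → ℕ → Prop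
  | .var _ _, _ => False
  | .const _ _, _ => False
  | .lam x _ t, z => x = z ∨ bindsVar t z
  | .app s t, z => bindsVar s z ∨ bindsVar t z

/-- The constants occurring in a term. -/
def consts : Tm → Set ℕ
  | .var _ _ => ∅
  | .const c _ => {c}
  | .lam _ _ t => consts t
  | .app s t => consts s ∪ consts t

/-- The list of bound-variable names. -/
def binders : Tm → List ℕ
  | .var _ _ => []
  | .const _ _ => []
  | .lam x _ t => x :: binders t
  | .app s t => binders s ++ binders t

/-- A term is well-named if all its binders are pairwise distinct. -/
def WellNamed (t : Tm) : Prop := t.binders.Nodup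

/-- Substitution of `u` for the free variable `x : A` (capture-permitting; it is
only applied to well-named terms with disjoint bound variables). -/
def subst (x : ℕ) (A : Ty) (u : Tm) : Tm → Tm
  | .var y B => if y = x ∧ B = A then u else .var y B
  | .const c B => .const c B
  | .lam y B t => if y = x ∧ B = A then .lam y B t else .lam y B (subst x A u t)
  | .app s t => .app (subst x A u s) (subst x A u t)

/-- One-step β-reduction, closed under congruence. -/
inductive Beta : Tm → Tm → Prop
  | beta (x : ℕ) (A : Ty) (t u : Tm) : Beta (.app (.lam x A t) u) (subst x A u t)
  | appL {s s' : Tm} (t : Tm) : Beta s s' → Beta (.app s t) (.app s' t)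
  | appR (s : Tm) {t t' : Tm} : Beta t t' → Beta (.app s t) (.app s t')
  | lam (x : ℕ) (A : Ty) {t t' : Tm} : Beta t t' → Beta (Tm.lam x A t) (Tm.lam x A t')

/-- β-equality. -/
def BetaEq : Tm → Tm → Prop := Relation.EqvGen Beta

/-- Application of a head to a list of arguments. -/
def appArgs (t : Tm) (args : List Tm) : Tm := args.foldl .app t

inductive IsHead : Tm → Prop
  | var (x : ℕ) (A : Ty) : IsHead (.var x A)
  | const (c : ℕ) (A : Ty) : IsHead (.const c A)

/-- η-long normal forms. -/
inductive ELNF : Tm → Prop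
  | head (u : Tm) (args : List Tm) :
      IsHead u → (appArgs u args).ty? = some Ty.base →
      (∀ i : Fin args.length, ELNF args[i]) → ELNF (appArgs u args)
  | lam (x : ℕ) (A : Ty) {t : Tm} : ELNF t → ELNF (Tm.lam x A t)

/-- Strip the leading λ-abstractions. -/
def stripLams : Tm → List (ℕ × Ty) × Tm
  | .lam x A t => ((x, A) :: (stripLams t).1, (stripLams t).2)
  | t => ([], t)

/-- Decompose a term into its head and arguments. -/
def headArgs : Tm → Tm × List Tm
  | .app s u => ((headArgs s).1, (headArgs s).2 ++ [u])
  | t => (t, [])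

/-- `λx₁…xₙ. b` for a list of binders. -/
def lams (xs : List (ℕ × Ty)) (b : Tm) : Tm := xs.foldr (fun p s => Tm.lam p.1 p.2 s) b

/-- Replace the free variables `xs` by their forbidden constants (via `fc`). -/
def fsubst (fc : ℕ → ℕ) (xs : List (ℕ × Ty)) (t : Tm) : Tm :=
  xs.foldl (fun s p => subst p.1 p.2 (Tm.const (fc p.1) p.2) s) t

/-- Replace each `yⱼ ∈ ys` by the forbidden constant of the corresponding
`xⱼ ∈ xs`. -/
def fsubstPaired (fc : ℕ → ℕ) (ys xs : List (ℕ × Ty)) (t : Tm) : Tm :=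
  (ys.zip xs).foldl (fun s p => subst p.1.1 p.1.2 (Tm.const (fc p.2.1) p.2.2) s) t

def isApp : Tm → Bool
  | .app _ _ => true
  | _ => false

/-- The right size `δ(u)` of a right term. -/
def rsize : Tm → ℕ
  | .var _ _ => 0
  | .const _ _ => 0
  | .lam _ _ t => rsize t
  | .app s t => rsize s + rsize t + (if s.isApp then 0 else 1)

/-- Largest width of any type occurring in the term. -/
def maxWidth : Tm → ℕ
  | .var _ A => A.subWidth
  | .const _ A => A.subWidth
  | .lam _ A t => max A.subWidth (maxWidth t)
  | .app s t => max (maxWidth s) (maxWidth t)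

end Tm

/-! ## Dual interpolation problems -/

/-- An interpolation (dis)equation `x v₁ … vₙ ≈ u`. -/
structure DIEqn : Type where
  args : List Tm
  rhs : Tm
  pos : Bool

/-- A dual interpolation problem: a finite nonempty family of interpolation
equations and disequations with the same free variable `x : xty`, together with
the fresh forbidden constants: `fc` assigns to each bound variable of a right
term its forbidden constant. -/
structure DIProblem : Type where
  xty : Ty
  eqns : List DIEqn
  eqns_ne : eqns ≠ []
  forb : Set ℕ
  fc : ℕ → ℕ
  fc_mem : ∀ x, fc x ∈ forb
  fc_inj : Function.Injective fc
  wf : ∀ e ∈ eqns,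
    e.args.length = xty.args.length ∧
    (∀ p ∈ e.args.zip xty.args, p.1.ty? = some p.2 ∧ p.1.Closed ∧ p.1.ELNF) ∧
    e.rhs.ty? = some Ty.base ∧ e.rhs.Closed ∧
    (∀ c ∈ e.rhs.consts, c ∉ forb) ∧ (∀ v ∈ e.args, ∀ c ∈ v.consts, c ∉ forb)

/-- The order of a problem is the order of its free variable. -/
def DIProblem.order (P : DIProblem) : ℕ := P.xty.order

/-- The right size `δ` of a problem. -/
def DIProblem.delta (P : DIProblem) : ℕ := (P.eqns.map fun e => e.rhs.rsize).sum

/-- The arity `α` of a problem: the largest width of a type among the subtypes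
associated with `P`. -/
def DIProblem.arity (P : DIProblem) : ℕ :=
  max P.xty.subWidth ((P.eqns.map fun e => e.rhs.maxWidth).foldr max 0)

/-- A potential solution term for `P`: closed, in η-long normal form, of the
right type, well-named and without forbidden constants. -/
def Candidate (P : DIProblem) (t : Tm) : Prop :=
  t.Closed ∧ t.ELNF ∧ t.ty? = some P.xty ∧ t.WellNamed ∧ ∀ c ∈ t.consts, c ∉ P.forb

/-- `t ⊨ P`. -/
def Solves (P : DIProblem) (t : Tm) : Prop :=
  Candidate P t ∧ ∀ e ∈ P.eqns,
    (e.pos = true → Tm.BetaEq (Tm.appArgs t e.args) e.rhs) ∧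
    (e.pos = false → ¬ Tm.BetaEq (Tm.appArgs t e.args) e.rhs)

/-! ## Term trees (η-long normal forms with dummy lambdas) -/

/-- Labels of term-tree nodes. -/
inductive TLabel : Type
  | lam : List (ℕ × Ty) → TLabel
  | var : ℕ → Ty → TLabel
  | const : ℕ → Ty → TLabel
  deriving DecidableEq

/-- Term trees. -/
inductive TTree : Type
  | node : TLabel → List TTree → TTree

def TTree.label : TTree → TLabel
  | .node l _ => l

def TTree.children : TTree → List TTree
  | .node _ cs => cs

/-- The subtree at a path (nodes are identified with paths from the root). -/
def TTree.at? : TTree → List ℕ → Option TTree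
  | t, [] => some t
  | t, i :: p =>
      match t.children[i]? with
      | some c => TTree.at? c p
      | none => none

/-- The label at a path. -/
def TTree.labelAt? (T : TTree) (p : List ℕ) : Option TLabel := (T.at? p).map TTree.label

/-- The variables bound by λ-labels along a path. -/
def TTree.bindersAlong : TTree → List ℕ → List ℕ
  | _, [] => []
  | t, i :: p =>
      (match t.label with
       | .lam xs => xs.map Prod.fst
       | _ => []) ++
      (match t.children[i]? with
       | some c => TTree.bindersAlong c p
       | none => [])

/-- `λ…y…` labels some node of the tree. -/
def TTree.BindsVar (t : TTree) (y : ℕ) : Prop :=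
  ∃ p xs, t.labelAt? p = some (.lam xs) ∧ y ∈ xs.map Prod.fst

/-- `y` occurs free in the tree. -/
def TTree.FreeVarOcc (t : TTree) (y : ℕ) : Prop :=
  ∃ p A, t.labelAt? p = some (.var y A) ∧ y ∉ t.bindersAlong p

def TLabel.isHeadLabel : TLabel → Prop
  | .lam _ => False
  | _ => True

/-! ## Tree representation of a term -/

mutual
  /-- `RepLam T t`: the λ-rooted tree `T` represents the term `t`. -/
  inductive RepLam : TTree → Tm → Prop
    | mk (xs : List (ℕ × Ty)) (h : TTree) (b : Tm) :
        RepHead h b → RepLam (TTree.node (.lam xs) [h]) (Tm.lams xs b)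
  /-- `RepHead T t`: the head-rooted tree `T` represents the base-type term `t`. -/
  inductive RepHead : TTree → Tm → Prop
    | var (x : ℕ) (A : Ty) (cs : List TTree) (args : List Tm) :
        cs.length = args.length → (∀ p ∈ cs.zip args, RepLam p.1 p.2) →
        RepHead (TTree.node (.var x A) cs) (Tm.appArgs (Tm.var x A) args)
    | const (c : ℕ) (A : Ty) (cs : List TTree) (args : List Tm) :
        cs.length = args.length → (∀ p ∈ cs.zip args, RepLam p.1 p.2) →
        RepHead (TTree.node (.const c A) cs) (Tm.appArgs (Tm.const c A) args)
end

/-- The tree `T` is the tree representation (with dummy lambdas) of `t`. -/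
def Represents (T : TTree) (t : Tm) : Prop := RepLam T t

/-! ## Look-up tables -/

mutual
  /-- A `θ` look-up table: a partial map from variables of the term tree to
  triples `l ξ j`. -/
  inductive Theta : Type
    | mk : (ℕ → ThetaEntry) → Theta
  inductive ThetaEntry : Type
    | none : ThetaEntry
    | some : Tm → Xi → ℕ → ThetaEntry
  /-- A `ξ` look-up table: a partial map from variables of left terms to
  triples `t' θ j` (with `t'` a node of the term tree). -/
  inductive Xi : Type
    | mk : (ℕ → XiEntry) → Xi
  inductive XiEntry : Type
    | none : XiEntry
    | some : List ℕ → Theta → ℕ → XiEntry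
end

def Theta.fn : Theta → ℕ → ThetaEntry
  | .mk f => f

def Xi.fn : Xi → ℕ → XiEntry
  | .mk f => f

def Theta.look (θ : Theta) (y : ℕ) : Option (Tm × Xi × ℕ) :=
  match θ.fn y with
  | .none => none
  | .some l ξ j => some (l, ξ, j)

def Xi.look (ξ : Xi) (z : ℕ) : Option (List ℕ × Theta × ℕ) :=
  match ξ.fn z with
  | .none => none
  | .some t θ j => some (t, θ, j)

def Theta.empty : Theta := .mk fun _ => .none

def Xi.empty : Xi := .mk fun _ => .none

/-- Update a `θ` table with a list of new entries. -/
def Theta.updates (θ : Theta) (l : List (ℕ × (Tm × Xi × ℕ))) : Theta :=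
  .mk fun y =>
    match l.lookup y with
    | some v => .some v.1 v.2.1 v.2.2
    | none => θ.fn y

/-- Update a `ξ` table with a list of new entries. -/
def Xi.updates (ξ : Xi) (l : List (ℕ × (List ℕ × Theta × ℕ))) : Xi :=
  .mk fun z =>
    match l.lookup z with
    | some v => .some v.1 v.2.1 v.2.2
    | none => ξ.fn z

/-- `μ` extends `μ'`. -/
def Theta.Extends (θ θ' : Theta) : Prop := ∀ y v, θ'.look y = some v → θ.look y = some v

def Xi.Extends (ξ ξ' : Xi) : Prop := ∀ z v, ξ'.look z = some v → ξ.look z = some v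

/-! ## States and positions -/

inductive GState : Type
  | arg : List Tm → Tm → GState     -- argument state q[(l₁,…,lₖ), r]
  | val : Tm → Tm → GState          -- value state q[l, r]
  | emp : Tm → GState               -- empty state q[−, r]
  | finA : GState                   -- final state q[∀]
  | finE : GState                   -- final state q[∃]
  deriving DecidableEq

def GState.IsFinal : GState → Prop
  | .finA => True
  | .finE => True
  | _ => False

/-- The right term of a state. -/
def GState.rhs? : GState → Option Tm
  | .arg _ r => some r
  | .val _ r => some r
  | .emp r => some r
  | _ => none

/-- `λ…z…` occurs in a left term of the state. -/
def GState.BindsVar : GState → ℕ → Prop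
  | .val l _, z => l.bindsVar z
  | .arg ls _, z => ∃ l ∈ ls, l.bindsVar z
  | _, _ => False

/-- `z` occurs free in a left term of the state. -/
def GState.FreeVar : GState → ℕ → Prop
  | .val l _, z => l.freeName z
  | .arg ls _, z => ∃ l ∈ ls, l.freeName z
  | _, _ => False

/-- A position of the tree-checking game: a node of the term tree, a state and
the two look-up tables. -/
structure GPos : Type where
  node : List ℕ
  st : GState
  th : Theta
  xi : Xi

inductive MoveKind : Type
  | A1 | A2 | A3 | B1 | C1 | C2 | C3 | C4
  deriving DecidableEq

/-! ## The game moves (Figure 2) -/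

/-- Updates of `θ` at an A-move: the binders `xs` get the left terms `ls`
paired with `ξ` and the current position index `m`. -/
def aUpd (xs : List (ℕ × Ty)) (ls : List Tm) (ξ : Xi) (m : ℕ) :
    List (ℕ × (Tm × Xi × ℕ)) :=
  (xs.zip ls).map fun p => (p.1.1, (p.2, ξ, m))

/-- Updates of `ξ` at a C-move: the binders `zs` of the left term get the
successor nodes of `n` paired with `θ` and the current position index `m`. -/
def cUpd (n : List ℕ) (zs : List (ℕ × Ty)) (θ : Theta) (m : ℕ) :
    List (ℕ × (List ℕ × Theta × ℕ)) :=
  zs.zipIdx.map fun p => (p.1.1, (n ++ [p.2], θ, m))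

/-- The argument state produced when `∀` chooses the right subterm `s`
(moves B1 and C2): `q[(c_{i₁},…,c_{iₙ}), s{c̄/x̄}]`. -/
def argStateOf (fc : ℕ → ℕ) (s : Tm) : GState :=
  GState.arg ((s.stripLams.1).map fun p => Tm.const (fc p.1) p.2)
    (Tm.fsubst fc s.stripLams.1 s.stripLams.2)

/-- The value state produced at move C3 for the chosen `w` and `s`:
`q[w'{c̄/ȳ}, s{c̄/x̄}]`. -/
def valStateOf (fc : ℕ → ℕ) (w s : Tm) : GState :=
  GState.val (Tm.fsubstPaired fc w.stripLams.1 s.stripLams.1 w.stripLams.2)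
    (Tm.fsubst fc s.stripLams.1 s.stripLams.2)

/-- The moves of the tree-checking game (Figure 2 of the paper); `m` is the
index of the source position. -/
inductive GMove (T : TTree) (fc : ℕ → ℕ) (m : ℕ) : GPos → MoveKind → GPos → Prop
  | A1 (n : List ℕ) (xs : List (ℕ × Ty)) (ls : List Tm) (r : Tm)
      (θ : Theta) (ξ : Xi) (a : ℕ) :
      T.labelAt? n = some (.lam xs) → ls.length = xs.length →
      T.labelAt? (n ++ [0]) = some (.const a Ty.base) →
      GMove T fc m ⟨n, .arg ls r, θ, ξ⟩ .A1
        ⟨n ++ [0], if r = Tm.const a Ty.base then .finE else .finA,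
          θ.updates (aUpd xs ls ξ m), ξ⟩
  | A2 (n : List ℕ) (xs : List (ℕ × Ty)) (ls : List Tm) (r : Tm)
      (θ : Theta) (ξ : Xi) (f : ℕ) (A : Ty) (ss : List Tm) :
      T.labelAt? n = some (.lam xs) → ls.length = xs.length →
      T.labelAt? (n ++ [0]) = some (.const f A) → A ≠ Ty.base →
      r.headArgs = (Tm.const f A, ss) →
      GMove T fc m ⟨n, .arg ls r, θ, ξ⟩ .A2
        ⟨n ++ [0], .emp r, θ.updates (aUpd xs ls ξ m), ξ⟩
  | A2f (n : List ℕ) (xs : List (ℕ × Ty)) (ls : List Tm) (r : Tm)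
      (θ : Theta) (ξ : Xi) (f : ℕ) (A : Ty) :
      T.labelAt? n = some (.lam xs) → ls.length = xs.length →
      T.labelAt? (n ++ [0]) = some (.const f A) → A ≠ Ty.base →
      r.headArgs.1 ≠ Tm.const f A →
      GMove T fc m ⟨n, .arg ls r, θ, ξ⟩ .A2
        ⟨n ++ [0], .finA, θ.updates (aUpd xs ls ξ m), ξ⟩
  | A3 (n : List ℕ) (xs : List (ℕ × Ty)) (ls : List Tm) (r : Tm)
      (θ : Theta) (ξ ξ₀ : Xi) (y : ℕ) (B : Ty) (l : Tm) (i : ℕ) :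
      T.labelAt? n = some (.lam xs) → ls.length = xs.length →
      T.labelAt? (n ++ [0]) = some (.var y B) →
      (θ.updates (aUpd xs ls ξ m)).look y = some (l, ξ₀, i) →
      GMove T fc m ⟨n, .arg ls r, θ, ξ⟩ .A3
        ⟨n ++ [0], .val l r, θ.updates (aUpd xs ls ξ m), ξ₀⟩
  | B1 (n : List ℕ) (f : ℕ) (A : Ty) (r : Tm) (ss : List Tm)
      (θ : Theta) (ξ : Xi) (d : ℕ) (sd : Tm) :
      T.labelAt? n = some (.const f A) →
      r.headArgs = (Tm.const f A, ss) → ss[d]? = some sd →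
      GMove T fc m ⟨n, .emp r, θ, ξ⟩ .B1 ⟨n ++ [d], argStateOf fc sd, θ, ξ⟩
  | C1 (n : List ℕ) (y : ℕ) (B : Ty) (l r : Tm) (θ : Theta) (ξ : Xi) (a : ℕ) :
      T.labelAt? n = some (.var y B) →
      l.stripLams.2 = Tm.const a Ty.base →
      GMove T fc m ⟨n, .val l r, θ, ξ⟩ .C1
        ⟨n, if r = Tm.const a Ty.base then .finE else .finA, θ,
          ξ.updates (cUpd n l.stripLams.1 θ m)⟩
  | C2 (n : List ℕ) (y : ℕ) (B : Ty) (r : Tm) (θ : Theta) (ξ : Xi)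
      (c : ℕ) (A : Ty) (ss : List Tm) (d : ℕ) (sd : Tm) :
      T.labelAt? n = some (.var y B) → A ≠ Ty.base →
      r.headArgs = (Tm.const c A, ss) → ss[d]? = some sd →
      GMove T fc m ⟨n, .val (Tm.const c A) r, θ, ξ⟩ .C2
        ⟨n ++ [d], argStateOf fc sd, θ, ξ⟩
  | C2f (n : List ℕ) (y : ℕ) (B : Ty) (r : Tm) (θ : Theta) (ξ : Xi)
      (c : ℕ) (A : Ty) :
      T.labelAt? n = some (.var y B) → A ≠ Ty.base →
      r.headArgs.1 ≠ Tm.const c A →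
      GMove T fc m ⟨n, .val (Tm.const c A) r, θ, ξ⟩ .C2 ⟨n, .finA, θ, ξ⟩
  | C3 (n : List ℕ) (y : ℕ) (B : Ty) (l r : Tm) (θ : Theta) (ξ : Xi)
      (f : ℕ) (A : Ty) (ws ss : List Tm) (d : ℕ) (wd sd : Tm) :
      T.labelAt? n = some (.var y B) →
      (l.stripLams.2).headArgs = (Tm.const f A, ws) → ws ≠ [] →
      r.headArgs = (Tm.const f A, ss) → ws[d]? = some wd → ss[d]? = some sd →
      GMove T fc m ⟨n, .val l r, θ, ξ⟩ .C3
        ⟨n, valStateOf fc wd sd, θ, ξ.updates (cUpd n l.stripLams.1 θ m)⟩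
  | C3f (n : List ℕ) (y : ℕ) (B : Ty) (l r : Tm) (θ : Theta) (ξ : Xi)
      (f : ℕ) (A : Ty) (ws : List Tm) :
      T.labelAt? n = some (.var y B) →
      (l.stripLams.2).headArgs = (Tm.const f A, ws) → ws ≠ [] →
      r.headArgs.1 ≠ Tm.const f A →
      GMove T fc m ⟨n, .val l r, θ, ξ⟩ .C3
        ⟨n, .finA, θ, ξ.updates (cUpd n l.stripLams.1 θ m)⟩
  | C4 (n : List ℕ) (y : ℕ) (B : Ty) (l r : Tm) (θ θ₀ : Theta) (ξ : Xi)
      (x : ℕ) (C : Ty) (ws : List Tm) (n' : List ℕ) (i : ℕ) :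
      T.labelAt? n = some (.var y B) →
      (l.stripLams.2).headArgs = (Tm.var x C, ws) →
      (ξ.updates (cUpd n l.stripLams.1 θ m)).look x = some (n', θ₀, i) →
      GMove T fc m ⟨n, .val l r, θ, ξ⟩ .C4
        ⟨n', .arg ws r, θ₀, ξ.updates (cUpd n l.stripLams.1 θ m)⟩

/-! ## Plays of the tree-checking game -/

/-- A play of the game `G(t,P)`: a finite sequence of positions
`π(1),…,π(len)` starting at the root of the term tree with an initial state
chosen from a (dis)equation of `P`, proceeding by the game moves and ending at
the first final state.  `mv j` records which move produced position `j`. -/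
structure Play (T : TTree) (P : DIProblem) : Type where
  len : ℕ
  pos : ℕ → GPos
  mv : ℕ → MoveKind
  one_le : 1 ≤ len
  init_node : (pos 1).node = []
  init_th : (pos 1).th = Theta.empty
  init_xi : (pos 1).xi = Xi.empty
  init_st : ∃ e ∈ P.eqns, (pos 1).st = GState.arg e.args e.rhs
  steps : ∀ m, 1 ≤ m → m < len → GMove T P.fc m (pos m) (mv (m + 1)) (pos (m + 1))
  final_iff : ∀ m, 1 ≤ m → m ≤ len → ((pos m).st.IsFinal ↔ m = len)

namespace Play

variable {T : TTree} {P : DIProblem}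

/-- The sequence of positions of a play. -/
def trace (π : Play T P) : List GPos := (List.range π.len).map fun i => π.pos (i + 1)

/-- The refuter `∀` wins the play. -/
def AWins (π : Play T P) : Prop := (π.pos π.len).st = GState.finA

/-- The initial state of the play is the one given by the (dis)equation `e`. -/
def startsFrom (π : Play T P) (e : DIEqn) : Prop :=
  (π.pos 1).st = GState.arg e.args e.rhs

/-- `π.child j i`: position `π(j)` is a child of position `π(i)`
(Definition 4.10). -/
def child (π : Play T P) (j i : ℕ) : Prop :=
  i < j ∧ j < π.len ∧
  (((π.mv j = .A2 ∨ π.mv j = .B1 ∨ π.mv j = .C2 ∨ π.mv j = .C3) ∧ i = j - 1) ∨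
   (π.mv j = .A3 ∧ ∃ y B l ξ', T.labelAt? (π.pos j).node = some (.var y B) ∧
      (π.pos j).th.look y = some (l, ξ', i)) ∨
   (π.mv j = .C4 ∧ ∃ l r x C, (π.pos (j - 1)).st = GState.val l r ∧
      (l.stripLams.2).headArgs.1 = Tm.var x C ∧
      (π.pos j).xi.look x = some ((π.pos j).node, (π.pos j).th, i)))

/-- `π(j)` is a descendent of `π(i)`: the reflexive-transitive closure of the
child relation. -/
def desc (π : Play T P) : ℕ → ℕ → Prop := Relation.ReflTransGen π.child

/-- The interval `π(i,j)` is right-term invariant. -/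
def ri (π : Play T P) (i j : ℕ) : Prop :=
  ∃ r, (π.pos i).st.rhs? = some r ∧ (π.pos j).st.rhs? = some r

/-- The interval `π(i,j)` is nri: not ri, and `π(j)` is not final. -/
def nri (π : Play T P) (i j : ℕ) : Prop := ¬ π.ri i j ∧ ¬ (π.pos j).st.IsFinal

end Play

/-- Definition 4.5: the refuter `∀` loses the game `G(t,P)`. -/
def RefuterLoses (T : TTree) (P : DIProblem) : Prop :=
  (∀ e ∈ P.eqns, e.pos = true → ∀ π : Play T P, π.startsFrom e → ¬ π.AWins) ∧
  (∀ e ∈ P.eqns, e.pos = false → ∃ π : Play T P, π.startsFrom e ∧ π.AWins)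

/-- The number of (distinct) plays of the game `G(t,P)`. -/
noncomputable def numPlays (T : TTree) (P : DIProblem) : ℕ :=
  Nat.card { tr : List GPos // ∃ π : Play T P, π.trace = tr }

/-! ## Tiles -/

/-- The shape of a (composite) tile: for each atomic leaf of the root simple
tile, optionally a tile placed directly beneath it.  An occurrence of a tile in
a term tree is a pair of a path (the root head node) and a shape. -/
inductive Tile : Type
  | mk : List (Option Tile) → Tile

def Tile.subs : Tile → List (Option Tile)
  | .mk s => s

/-- The trivial simple-tile shape of a head node of a tree. -/
def TTree.simpleTile (t : TTree) : Tile := Tile.mk (List.replicate t.children.length none)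

/-- The tile occurrence `(p, τ)` is a valid region of the term tree `T`. -/
inductive TileValid (T : TTree) : List ℕ → Tile → Prop
  | mk (p : List ℕ) (subs : List (Option Tile)) (t' : TTree) :
      T.at? p = some t' → t'.label.isHeadLabel → subs.length = t'.children.length →
      (∀ i τ', subs[i]? = some (some τ') → TileValid T (p ++ [i, 0]) τ') →
      TileValid T p (.mk subs)

/-- The head nodes of a tile occurrence. -/
inductive TileHead (T : TTree) : List ℕ → Tile → List ℕ → Prop
  | root (p : List ℕ) (subs : List (Option Tile)) : TileHead T p (.mk subs) p
  | sub (p : List ℕ) (subs : List (Option Tile)) (i : ℕ) (τ' : Tile) (q : List ℕ) :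
      subs[i]? = some (some τ') → TileHead T (p ++ [i, 0]) τ' q →
      TileHead T p (.mk subs) q

/-- The λ-nodes of a tile occurrence. -/
inductive TileLam (T : TTree) : List ℕ → Tile → List ℕ → Prop
  | lam (p : List ℕ) (subs : List (Option Tile)) (i : ℕ) :
      i < subs.length → TileLam T p (.mk subs) (p ++ [i])
  | sub (p : List ℕ) (subs : List (Option Tile)) (i : ℕ) (τ' : Tile) (q : List ℕ) :
      subs[i]? = some (some τ') → TileLam T (p ++ [i, 0]) τ' q →
      TileLam T p (.mk subs) q

/-- The atomic leaves of a tile occurrence. -/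
inductive TileLeaf (T : TTree) : List ℕ → Tile → List ℕ → Prop
  | leaf (p : List ℕ) (subs : List (Option Tile)) (i : ℕ) :
      subs[i]? = some none → TileLeaf T p (.mk subs) (p ++ [i])
  | sub (p : List ℕ) (subs : List (Option Tile)) (i : ℕ) (τ' : Tile) (q : List ℕ) :
      subs[i]? = some (some τ') → TileLeaf T (p ++ [i, 0]) τ' q →
      TileLeaf T p (.mk subs) q

/-- All nodes of a tile occurrence. -/
def TileNodeAll (T : TTree) (p : List ℕ) (τ : Tile) (q : List ℕ) : Prop :=
  TileHead T p τ q ∨ TileLam T p τ q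

/-- `y` is bound by some λ-node of the tile. -/
def TileBindsName (T : TTree) (p : List ℕ) (τ : Tile) (y : ℕ) : Prop :=
  ∃ q xs, TileLam T p τ q ∧ T.labelAt? q = some (.lam xs) ∧ y ∈ xs.map Prod.fst

/-- There is an occurrence, at node `q` of the tile, of the variable `y` free
in the tile. -/
def TileFreeVarAt (T : TTree) (p : List ℕ) (τ : Tile) (q : List ℕ) (y : ℕ) : Prop :=
  TileHead T p τ q ∧ (∃ A, T.labelAt? q = some (.var y A)) ∧
  ∀ t', T.at? p = some t' → y ∉ t'.bindersAlong (q.drop p.length)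

/-- There is an occurrence, at node `q` of the tile, of the constant `c`. -/
def TileConstAt (T : TTree) (p : List ℕ) (τ : Tile) (q : List ℕ) (c : ℕ) : Prop :=
  TileHead T p τ q ∧ ∃ A, T.labelAt? q = some (.const c A)

/-- A basic tile: exactly one occurrence of a free variable and no constants,
or exactly one occurrence of a constant and no free variables. -/
def BasicTile (T : TTree) (p : List ℕ) (τ : Tile) : Prop :=
  TileValid T p τ ∧
    (((∃! q : List ℕ, ∃ y : ℕ, TileFreeVarAt T p τ q y) ∧
        ¬ ∃ q c, TileConstAt T p τ q c) ∨
     ((∃! q : List ℕ, ∃ c : ℕ, TileConstAt T p τ q c) ∧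
        ¬ ∃ q y, TileFreeVarAt T p τ q y))

/-- A top tile: a basic tile with a free variable occurrence bound by the
initial λ of the term tree. -/
def TopTile (T : TTree) (p : List ℕ) (τ : Tile) : Prop :=
  BasicTile T p τ ∧ ∃ q y xs, TileFreeVarAt T p τ q y ∧
    T.label = TLabel.lam xs ∧ y ∈ xs.map Prod.fst

/-- `γ` (rooted at `pγ`) is below the atomic leaf `q` of `τ`: there is a path
of successors from `q` to `pγ`. -/
def TileBelowAt (T : TTree) (p : List ℕ) (τ : Tile) (q pγ : List ℕ) : Prop :=
  TileLeaf T p τ q ∧ q <+: pγ ∧ q ≠ pγ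

/-- `γ` is an immediate dependent of `τ` below the atomic leaf `q` of `τ`:
it is below `q` and contains a free variable bound in `τ`. -/
def ImmDependentAt (T : TTree) (p : List ℕ) (τ : Tile) (q pγ : List ℕ) (γ : Tile) :
    Prop :=
  BasicTile T pγ γ ∧ TileBelowAt T p τ q pγ ∧
  ∃ q' y, TileFreeVarAt T pγ γ q' y ∧ TileBindsName T p τ y

/-- `γ` is a dependent of `τ` below the atomic leaf `q` of `τ`. -/
inductive DependentAt (T : TTree) : List ℕ → Tile → List ℕ → List ℕ → Tile → Prop
  | imm (p : List ℕ) (τ : Tile) (q pγ : List ℕ) (γ : Tile) :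
      ImmDependentAt T p τ q pγ γ → DependentAt T p τ q pγ γ
  | trans (p : List ℕ) (τ : Tile) (q p' : List ℕ) (τ' : Tile) (q' pγ : List ℕ)
      (γ : Tile) :
      ImmDependentAt T p τ q p' τ' → DependentAt T p' τ' q' pγ γ →
      DependentAt T p τ q pγ γ

/-- `γ` is a dependent of `τ`. -/
def Dependent (T : TTree) (p : List ℕ) (τ : Tile) (pγ : List ℕ) (γ : Tile) : Prop :=
  ∃ q, DependentAt T p τ q pγ γ

/-- Two tiles belong to the same family. -/
def SameFamily (T : TTree) (p₁ : List ℕ) (τ₁ : Tile) (p₂ : List ℕ) (τ₂ : Tile) : Prop :=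
  Dependent T p₁ τ₁ p₂ τ₂ ∨ Dependent T p₂ τ₂ p₁ τ₁ ∨
  ∃ p' τ', Dependent T p' τ' p₁ τ₁ ∧ Dependent T p' τ' p₂ τ₂

/-- `τ₂` is in the family of tiles associated with `τ₁`. -/
def InFamily (T : TTree) (p₁ : List ℕ) (τ₁ : Tile) (p₂ : List ℕ) (τ₂ : Tile) : Prop :=
  (p₁ = p₂ ∧ τ₁ = τ₂) ∨ SameFamily T p₁ τ₁ p₂ τ₂

/-- `τ` is end at its atomic leaf `q` (j-end): it has no immediate dependents
below `q`. -/
def EndAt (T : TTree) (p : List ℕ) (τ : Tile) (q : List ℕ) : Prop :=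
  TileLeaf T p τ q ∧ ¬ ∃ pγ γ, ImmDependentAt T p τ q pγ γ

/-- An end tile: end at every atomic leaf. -/
def EndTile (T : TTree) (p : List ℕ) (τ : Tile) : Prop :=
  ∀ q, TileLeaf T p τ q → EndAt T p τ q

/-- A constant tile: it contains an occurrence of a constant, or is a
dependent of a constant tile. -/
inductive ConstTile (T : TTree) : List ℕ → Tile → Prop
  | base (p : List ℕ) (τ : Tile) :
      (∃ q c, TileConstAt T p τ q c) → ConstTile T p τ
  | dep (p : List ℕ) (τ : Tile) (p' : List ℕ) (τ' : Tile) :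
      ConstTile T p' τ' → Dependent T p' τ' p τ → ConstTile T p τ

/-- Renaming of labels: bound variables are renamed by `ρ`, the free variable
and the constants are kept. -/
def LabelRen (ρ : ℕ → ℕ) (bound : ℕ → Prop) : TLabel → TLabel → Prop
  | .lam xs, .lam ys => ys = xs.map fun p => (ρ p.1, p.2)
  | .var x A, .var x' A' => A = A' ∧ ((bound x ∧ x' = ρ x) ∨ (¬ bound x ∧ x' = x))
  | .const c A, .const c' A' => c = c' ∧ A = A'
  | _, _ => False

/-- Tile equivalence `τ ≡ γ` (α-equivalence of basic tiles with the same single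
free variable occurrence); corresponding nodes are at the same relative
paths. -/
def TileEquiv (T : TTree) (p : List ℕ) (τ : Tile) (p' : List ℕ) (γ : Tile) : Prop :=
  BasicTile T p τ ∧ BasicTile T p' γ ∧ τ = γ ∧
  ∃ ρ : ℕ → ℕ,
    ∀ q l l', TileNodeAll T p τ q → T.labelAt? q = some l →
      T.labelAt? (p' ++ q.drop p.length) = some l' →
      LabelRen ρ (TileBindsName T p τ) l l'

/-! ## Plays on tiles -/

namespace Play

variable {T : TTree} {P : DIProblem}

/-- `π(i,j)` is a play on the tile occurrence `(p, τ)` ending at its atomic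
leaf `q`, decomposed as the list `cuts` of consecutive plays `(iₗ, jₗ)` on the
simple tiles along the branch of `τ` from its root to `q`. -/
inductive TilePlayCuts (π : Play T P) :
    List ℕ → Tile → List (ℕ × ℕ) → List ℕ → Prop
  | simple (p : List ℕ) (subs : List (Option Tile)) (d i j : ℕ) :
      subs[d]? = some none → (π.pos i).node = p → (π.pos j).node = p ++ [d] →
      π.child j i → TilePlayCuts π p (.mk subs) [(i, j)] (p ++ [d])
  | step (p : List ℕ) (subs : List (Option Tile)) (d i j j₂ : ℕ)
      (cuts : List (ℕ × ℕ)) (q : List ℕ) (τ' : Tile) :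
      subs[d]? = some (some τ') → (π.pos i).node = p →
      (π.pos j).node = p ++ [d] → π.child j i →
      TilePlayCuts π (p ++ [d, 0]) τ' ((j + 1, j₂) :: cuts) q →
      TilePlayCuts π p (.mk subs) ((i, j) :: (j + 1, j₂) :: cuts) q

/-- `π(i,j)` is a play on the tile occurrence `(p, τ)` ending at its atomic
leaf `q`. -/
def TilePlayOn (π : Play T P) (p : List ℕ) (τ : Tile) (i j : ℕ) (q : List ℕ) :
    Prop :=
  ∃ cuts x y, π.TilePlayCuts p τ cuts q ∧ cuts.head? = some x ∧ x.1 = i ∧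
    cuts.getLast? = some y ∧ y.2 = j

/-- A shortest play on `(p, τ)` ending at the leaf `q` (no proper prefix is a
play on `τ` ending at `q`). -/
def ShortestLeafPlay (π : Play T P) (p : List ℕ) (τ : Tile) (i j : ℕ)
    (q : List ℕ) : Prop :=
  π.TilePlayOn p τ i j q ∧ ∀ k, k < j → ¬ π.TilePlayOn p τ i k q

/-- A shortest play on `(p, τ)` (no proper prefix is a play on `τ`). -/
def ShortestPlay (π : Play T P) (p : List ℕ) (τ : Tile) (i j : ℕ) : Prop :=
  (∃ q, π.TilePlayOn p τ i j q) ∧ ∀ k, k < j → ¬ ∃ q, π.TilePlayOn p τ i k q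

/-- The interval `π(i,j)` is internal to the tile `(p, τ)`. -/
def InternalOn (π : Play T P) (p : List ℕ) (τ : Tile) (i j : ℕ) : Prop :=
  ∀ n, i ≤ n → n ≤ j → TileNodeAll T p τ (π.pos n).node

end Play

/-- `τ` is directed towards its atomic leaf `q` (j-directed) with respect to
the interval `π(i,|π|)` (Definition 5.18). -/
inductive DirectedFrom {T : TTree} {P : DIProblem} (π : Play T P)
    (p : List ℕ) (τ : Tile) (q : List ℕ) : ℕ → Prop
  | none (i : ℕ) :
      (∀ m, i ≤ m → m ≤ π.len → (π.pos m).node ≠ p) → DirectedFrom π p τ q i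
  | step (i m n : ℕ) :
      i ≤ m → (π.pos m).node = p →
      (∀ m', i ≤ m' → m' < m → (π.pos m').node ≠ p) →
      π.ShortestLeafPlay p τ m n q → π.ri m n →
      DirectedFrom π p τ q (n + 1) → DirectedFrom π p τ q i

/-- `τ` is directed towards its atomic leaf `q` (j-directed) with respect to
the game `G(t,P)`. -/
def DirectedWrtGame (T : TTree) (P : DIProblem) (p : List ℕ) (τ : Tile)
    (q : List ℕ) : Prop :=
  ∀ π : Play T P, DirectedFrom π p τ q 1

/-! ## b-partitions, variation and correspondence -/

namespace Play

variable {T : TTree} {P : DIProblem}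

/-- The b-partition for the position `π(j)` at a λ-node (Definition 6.14):
`js = [j₀, j₁, …, jₙ]` with `j₀ = 1`, `jₙ = j` and, for each `m`, the interval
`π(jₘ₋₁ + 1, jₘ)` is a play on the `m`-th simple tile along the branch from the
root of the term tree to the node of `π(j)`, ending at the `m`-th λ-node of
that branch. -/
def IsBPartition (π : Play T P) (j : ℕ) (js : List ℕ) : Prop :=
  js.length = (π.pos j).node.length / 2 + 1 ∧ js[0]? = some 1 ∧
  js[(π.pos j).node.length / 2]? = some j ∧
  ∀ m, 1 ≤ m → m ≤ (π.pos j).node.length / 2 →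
    ∀ a b, js[m - 1]? = some a → js[m]? = some b →
      (π.pos (a + 1)).node = (π.pos j).node.take (2 * m - 1) ∧
      (π.pos b).node = (π.pos j).node.take (2 * m) ∧ π.child b (a + 1)

/-- Positions `π(j)`, `π(j')` vary at `π(jk)`, `π(j'k)` with the simple tile
rooted at the path `pτ` (Definition 8.4): they are at the same λ-node and `pτ`
is the head of the first simple tile in their b-partitions at which the two
plays differ. -/
def VaryAt (π : Play T P) (j j' jk j'k : ℕ) (pτ : List ℕ) : Prop :=
  (π.pos j).node = (π.pos j').node ∧ j ≠ j' ∧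
  ∃ js js' k, π.IsBPartition j js ∧ π.IsBPartition j' js' ∧ 1 ≤ k ∧
    (∀ m, m < k → js[m]? = js'[m]?) ∧
    js[k]? = some jk ∧ js'[k]? = some j'k ∧ jk ≠ j'k ∧
    pτ = (π.pos j).node.take (2 * k - 1)

/-- The intervals `π(i,j)` and `π(i',j')` correspond (Definition 8.3): they
have the same length, visit the same nodes and have states of the same kind
with the same left terms (the right terms may differ). -/
def corr (π : Play T P) (i j i' j' : ℕ) : Prop :=
  j < π.len ∧ j' < π.len ∧ i ≤ j ∧ i' ≤ j' ∧ j - i = j' - i' ∧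
  ∀ k, k ≤ j - i →
    (π.pos (i + k)).node = (π.pos (i' + k)).node ∧
    (∀ l r, (π.pos (i + k)).st = GState.val l r →
      ∃ r', (π.pos (i' + k)).st = GState.val l r') ∧
    (∀ ls r, (π.pos (i + k)).st = GState.arg ls r →
      ∃ r', (π.pos (i' + k)).st = GState.arg ls r') ∧
    (∀ r, (π.pos (i + k)).st = GState.emp r →
      ∃ r', (π.pos (i' + k)).st = GState.emp r')

end Play

/-- No simple tile headed by an occurrence of the variable `y` is a dependent
of the tile `(pτ, τ)`. -/
def NotDependentHead (T : TTree) (pτ : List ℕ) (τ : Tile) (y : ℕ) : Prop :=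
  ∀ q A t', T.labelAt? q = some (TLabel.var y A) → T.at? q = some t' →
    ¬ Dependent T pτ τ q t'.simpleTile

mutual
  /-- Look-up tables `n`-similar except for the tile `(pτ, τ)`
  (Definition 8.6). -/
  def ThetaSim (T : TTree) (pτ : List ℕ) (τ : Tile) : ℕ → Theta → Theta → Prop
    | 0, θ, θ' => θ = θ'
    | n + 1, θ, θ' =>
        (∀ y, (θ.look y).isSome = (θ'.look y).isSome) ∧
        (∀ y l ξ i, NotDependentHead T pτ τ y → θ.look y = some (l, ξ, i) →
          ∃ ξ' i', θ'.look y = some (l, ξ', i') ∧ XiSim T pτ τ n ξ ξ')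
  def XiSim (T : TTree) (pτ : List ℕ) (τ : Tile) : ℕ → Xi → Xi → Prop
    | 0, ξ, ξ' => ξ = ξ'
    | n + 1, ξ, ξ' =>
        (∀ z, (ξ.look z).isSome = (ξ'.look z).isSome) ∧
        (∀ z t θ i, ξ.look z = some (t, θ, i) →
          ∃ θ' i', ξ'.look z = some (t, θ', i') ∧ ThetaSim T pτ τ n θ θ')
end

/-- Look-up tables similar except for the tile `(pτ, τ)`: `θ ∼τ θ'`. -/
def ThetaSimA (T : TTree) (pτ : List ℕ) (τ : Tile) (θ θ' : Theta) : Prop :=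
  ∃ n, ThetaSim T pτ τ n θ θ'

/-! ## The transformations T1 and T2 -/

/-- Replace the subtree at a path. -/
def TTree.replaceAt : TTree → List ℕ → TTree → TTree
  | _, [], u => u
  | .node l cs, i :: p, u =>
      .node l (cs.mapIdx fun j c => if j = i then TTree.replaceAt c p u else c)

/-- The game `G(t,P)` avoids the subtree at path `p`. -/
def AvoidedBy (T : TTree) (P : DIProblem) (p : List ℕ) : Prop :=
  ∀ π : Play T P, ∀ i, 1 ≤ i → i ≤ π.len → (π.pos i).node ≠ p

/-- Transformation T1: if every play avoids the subtree rooted at `p` (whose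
root is labelled with a variable or a higher-order constant), replace it by a
single node labelled with a fresh base-type constant `d`. -/
def T1Rel (P : DIProblem) (T T' : TTree) : Prop :=
  ∃ (p : List ℕ) (t' : TTree) (d : ℕ),
    T.at? p = some t' ∧
    ((∃ y B, t'.label = TLabel.var y B) ∨
      (∃ f B, t'.label = TLabel.const f B ∧ B ≠ Ty.base)) ∧
    AvoidedBy T P p ∧
    d ∉ P.forb ∧ (∀ e ∈ P.eqns, d ∉ e.rhs.consts) ∧
    T' = T.replaceAt p (TTree.node (TLabel.const d Ty.base) [])

/-- Transformation T2: if the basic tile `(p, τ)` is end at its atomic leaf `q`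
and directed towards `q` with respect to the game, replace the subtree rooted
at `τ` by the subtree directly beneath `q`. -/
def T2Rel (P : DIProblem) (T T' : TTree) : Prop :=
  ∃ (p q : List ℕ) (τ : Tile) (sub : TTree),
    BasicTile T p τ ∧ EndAt T p τ q ∧ DirectedWrtGame T P p τ q ∧
    T.at? (q ++ [0]) = some sub ∧
    T' = T.replaceAt p sub

/-- `T` (as a tree) solves `P`: it represents a term `t` with `t ⊨ P`. -/
def TSolves (P : DIProblem) (T : TTree) : Prop := ∃ t, Represents T t ∧ Solves P t

/-! ## Size measures -/

/-- A head node with at least one successor: a simple tile with atomic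
leaves. -/
def TTree.headWithChildren : TTree → Bool
  | .node (.lam _) _ => false
  | .node _ [] => false
  | .node _ (_ :: _) => true

/-- The number of simple tiles with atomic leaves along a path. -/
def TTree.tilesOnPath : TTree → List ℕ → ℕ
  | t, [] => if t.headWithChildren then 1 else 0
  | t, i :: p =>
      (if t.headWithChildren then 1 else 0) +
      match t.children[i]? with
      | some c => TTree.tilesOnPath c p
      | none => 0

/-- `|t|`: the number of simple tiles with atomic leaves in a longest branch. -/
noncomputable def TTree.branchTilesMax (T : TTree) : ℕ :=
  sSup { n : ℕ | ∃ p : List ℕ, (T.at? p).isSome = true ∧ TTree.tilesOnPath T p = n }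

/-- `‖t‖`: the total number of simple tiles with atomic leaves. -/
noncomputable def TTree.totalTiles (T : TTree) : ℕ :=
  Nat.card { p : List ℕ // ∃ t', T.at? p = some t' ∧ t'.headWithChildren = true }

/-- A top simple tile: a simple tile whose head variable is bound by the
initial λ of the term tree. -/
def IsTopSimpleTile (T : TTree) (p : List ℕ) : Prop :=
  ∃ t' y A xs, T.at? p = some t' ∧ t'.label = TLabel.var y A ∧
    t'.children ≠ [] ∧ T.label = TLabel.lam xs ∧ y ∈ xs.map Prod.fst

/-- The tower function of Theorem 9.3: `g 1 = 1` and `g (k+1) = (α+1)^(g k)`. -/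
def gfun (α : ℕ) : ℕ → ℕ
  | 0 => 1
  | 1 => 1
  | k + 2 => (α + 1) ^ gfun α (k + 1)

/-!
Let `π(i,m)` be the `j`-play on `τ` ending at its `j`-end leaf `q`, and call `[i, m]` the window.
The only θ-entries whose left terms may use ξ-entries created in the window are those created in
it, at λ-nodes of `τ`, hence keyed by variables bound in `τ`; such an entry can only be consulted
(move A3) at a node labelled by that variable. Strictly below `q` that node would
head an immediate `j`-dependent of `τ`, which the `j`-end hypothesis rules out; elsewhere the
θ-tables in use contain no window entries at all. So from `m` on, no left term of the play
contains a variable whose ξ-entry was created in the window.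

A position `π(b)` with `b > m` can be a child of a window position `π(a)` at a head node only
through move C4 resolving a variable through a ξ-entry created at `a`, which was just excluded, or
by `b = a + 1 = m + 1`, impossible since `π(m)` is in an argument state. Hence every
simple-tile step of a play on `τ` from `i` stays inside the window; a step ending at `m` ends at
`q`, below which that play cannot continue since `q` is an atomic leaf of `τ`. So `n ≤ m`.
-/

namespace Tm

def varOcc : Tm → Set ℕ
  | .var y _ => {y}
  | .const _ _ => ∅
  | .lam _ _ t => varOcc t
  | .app s t => varOcc s ∪ varOcc t

theorem varOcc_stripLams_snd_subset (t : Tm) : t.stripLams.2.varOcc ⊆ t.varOcc := by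
  induction t with
  | lam y A u ih => exact ih
  | _ => exact subset_rfl

theorem mem_varOcc_of_headArgs_fst_eq {t : Tm} {x : ℕ} {C : Ty}
    (h : t.headArgs.1 = .var x C) : x ∈ t.varOcc := by
  induction t with
  | var y A => cases h; rfl
  | app s u ih _ => exact .inl (ih h)
  | _ => cases h

theorem varOcc_subset_of_mem_headArgs_snd {t u : Tm} (hu : u ∈ t.headArgs.2) :
    u.varOcc ⊆ t.varOcc := by
  induction t with
  | app s v ih _ =>
    rcases List.mem_append.mp hu with hs | hv
    · exact (ih hs).trans Set.subset_union_left
    · rw [List.mem_singleton.mp hv]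
      exact Set.subset_union_right
  | _ => cases hu

theorem varOcc_subst_const_subset (y : ℕ) (A : Ty) (c : ℕ) (B : Ty) (t : Tm) :
    (subst y A (.const c B) t).varOcc ⊆ t.varOcc := by
  induction t with
  | var z D =>
    unfold subst
    split
    · exact Set.empty_subset _
    · exact subset_rfl
  | const => exact subset_rfl
  | lam z D u ih =>
    unfold subst
    split
    · exact subset_rfl
    · exact ih
  | app s u ihs ihu => exact Set.union_subset_union ihs ihu

theorem varOcc_fsubstPaired_subset (fc : ℕ → ℕ) (ys xs : List (ℕ × Ty)) (t : Tm) :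
    (fsubstPaired fc ys xs t).varOcc ⊆ t.varOcc := by
  unfold fsubstPaired
  induction ys.zip xs generalizing t with
  | nil => exact subset_rfl
  | cons a L ih => exact (ih _).trans (varOcc_subst_const_subset ..)

end Tm

theorem List.mem_of_lookup_eq_some {α β : Type*} [BEq α] [LawfulBEq α] {L : List (α × β)}
    {a : α} {b : β} (h : L.lookup a = some b) : (a, b) ∈ L := by
  obtain ⟨L₁, L₂, rfl, -⟩ := List.lookup_eq_some_iff.mp h
  simp

theorem Theta.look_updates_eq_some {θ : Theta} {L : List (ℕ × (Tm × Xi × ℕ))} {y : ℕ}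
    {v : Tm × Xi × ℕ} (h : (θ.updates L).look y = some v) :
    (y, v) ∈ L ∨ θ.look y = some v := by
  cases θ
  unfold Theta.look Theta.updates at h
  dsimp only [Theta.fn] at h
  cases hL : L.lookup y with
  | none => rw [hL] at h; exact .inr h
  | some w => rw [hL] at h; cases h; exact .inl (List.mem_of_lookup_eq_some hL)

theorem Xi.look_updates_eq_some {ξ : Xi} {L : List (ℕ × (List ℕ × Theta × ℕ))} {z : ℕ}
    {v : List ℕ × Theta × ℕ} (h : (ξ.updates L).look z = some v) :
    (z, v) ∈ L ∨ ξ.look z = some v := by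
  cases ξ
  unfold Xi.look Xi.updates at h
  dsimp only [Xi.fn] at h
  cases hL : L.lookup z with
  | none => rw [hL] at h; exact .inr h
  | some w => rw [hL] at h; cases h; exact .inl (List.mem_of_lookup_eq_some hL)

theorem Theta.look_updates_aUpd {θ : Theta} {xs : List (ℕ × Ty)} {ls : List Tm} {ξ : Xi}
    {w y : ℕ} {l : Tm} {ξ₀ : Xi} {k : ℕ}
    (h : (θ.updates (aUpd xs ls ξ w)).look y = some (l, ξ₀, k)) :
    (y ∈ xs.map Prod.fst ∧ l ∈ ls ∧ ξ₀ = ξ ∧ k = w) ∨ θ.look y = some (l, ξ₀, k) := by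
  refine (Theta.look_updates_eq_some h).imp_left fun hmem => ?_
  obtain ⟨⟨⟨x, A⟩, l'⟩, hxl, he⟩ := List.mem_map.mp hmem
  simp only [Prod.mk.injEq] at he
  obtain ⟨rfl, rfl, rfl, rfl⟩ := he
  exact ⟨List.mem_map.mpr ⟨_, (List.of_mem_zip hxl).1, rfl⟩, (List.of_mem_zip hxl).2, rfl, rfl⟩

theorem Xi.look_updates_cUpd {ξ : Xi} {n : List ℕ} {zs : List (ℕ × Ty)} {θ : Theta}
    {w z : ℕ} {n' : List ℕ} {θ' : Theta} {k : ℕ}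
    (h : (ξ.updates (cUpd n zs θ w)).look z = some (n', θ', k)) :
    (θ' = θ ∧ k = w ∧ ∃ d, n' = n ++ [d]) ∨ ξ.look z = some (n', θ', k) := by
  refine (Xi.look_updates_eq_some h).imp_left fun hmem => ?_
  obtain ⟨⟨⟨x, A⟩, d⟩, -, he⟩ := List.mem_map.mp hmem
  simp only [Prod.mk.injEq] at he
  obtain ⟨rfl, rfl, rfl, rfl⟩ := he
  exact ⟨rfl, rfl, d, rfl⟩

def GState.lefts : GState → List Tm
  | .arg ls _ => ls
  | .val l _ => [l]
  | _ => []

namespace GMove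

variable {T : TTree} {fc : ℕ → ℕ} {k : ℕ} {s s' : GPos} {mk : MoveKind}

theorem th_cases (h : GMove T fc k s mk s') :
    (s'.th = s.th ∧ s.node <+: s'.node) ∨
    (∃ xs ls r, T.labelAt? s.node = some (.lam xs) ∧ s.st = .arg ls r ∧
      s'.th = s.th.updates (aUpd xs ls s.xi k) ∧ s'.node = s.node ++ [0]) ∨
    (∃ l r, s.st = .val l r ∧ ∃ x ∈ l.varOcc, ∃ j,
      (s.xi.updates (cUpd s.node l.stripLams.1 s.th k)).look x = some (s'.node, s'.th, j)) := by
  cases h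
  case C4 l r _ _ _ x C ws _ j _ hhd hlk =>
    exact .inr (.inr ⟨l, r, rfl, x,
      Tm.varOcc_stripLams_snd_subset l (Tm.mem_varOcc_of_headArgs_fst_eq (by rw [hhd])), j, hlk⟩)
  all_goals first
    | exact .inl ⟨rfl, List.prefix_rfl⟩
    | exact .inl ⟨rfl, List.prefix_append _ _⟩
    | exact .inr (.inl ⟨_, _, _, ‹_›, rfl, rfl, rfl⟩)

theorem xi_cases (h : GMove T fc k s mk s') :
    s'.xi = s.xi ∨ (∃ zs, s'.xi = s.xi.updates (cUpd s.node zs s.th k)) ∨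
    ∃ y l j, s'.th.look y = some (l, s'.xi, j) := by
  cases h
  case A3 hlk => exact .inr (.inr ⟨_, _, _, hlk⟩)
  all_goals first
    | exact .inl rfl
    | exact .inr (.inl ⟨_, rfl⟩)

theorem lefts_cases (h : GMove T fc k s mk s') {l' : Tm} (hl' : l' ∈ s'.st.lefts) :
    l'.varOcc = ∅ ∨
    (∃ y B j, T.labelAt? s'.node = some (.var y B) ∧ s'.th.look y = some (l', s'.xi, j)) ∨
    (∃ l r, s.st = .val l r ∧ l'.varOcc ⊆ l.varOcc ∧
      s'.xi = s.xi.updates (cUpd s.node l.stripLams.1 s.th k)) := by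
  cases h
  case A1 | C1 => simp only [GState.lefts] at hl'; split_ifs at hl' <;> cases hl'
  case A2 | A2f | C2f | C3f => cases hl'
  case A3 hlab hlk =>
    obtain rfl := List.mem_singleton.mp hl'
    exact .inr (.inl ⟨_, _, _, hlab, hlk⟩)
  case B1 | C2 =>
    obtain ⟨_, -, rfl⟩ := List.mem_map.mp hl'
    exact .inl rfl
  case C3 l r _ _ _ _ ws _ _ wd _ _ hhd _ _ hwd _ =>
    obtain rfl := List.mem_singleton.mp hl'
    refine .inr (.inr ⟨l, r, rfl, ?_, rfl⟩)
    have hwd : wd ∈ l.stripLams.2.headArgs.2 := by rw [hhd]; exact List.mem_of_getElem? hwd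
    exact (Tm.varOcc_fsubstPaired_subset ..).trans <| (Tm.varOcc_stripLams_snd_subset _).trans <|
      (Tm.varOcc_subset_of_mem_headArgs_snd hwd).trans (Tm.varOcc_stripLams_snd_subset _)
  case C4 l r _ _ _ _ _ ws _ _ _ hhd _ =>
    refine .inr (.inr ⟨l, r, rfl, ?_, rfl⟩)
    have hl : l' ∈ l.stripLams.2.headArgs.2 := by rw [hhd]; exact hl'
    exact (Tm.varOcc_subset_of_mem_headArgs_snd hl).trans (Tm.varOcc_stripLams_snd_subset _)

theorem of_arg (h : GMove T fc k s mk s') {ls : List Tm} {r : Tm} (hs : s.st = .arg ls r) :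
    ∃ xs, T.labelAt? s.node = some (.lam xs) ∧ s'.th = s.th.updates (aUpd xs ls s.xi k) := by
  cases h <;> cases hs <;> exact ⟨_, ‹_›, rfl⟩

theorem of_head (h : GMove T fc k s mk s') (hhead : ∀ xs, T.labelAt? s.node ≠ some (.lam xs))
    (hnode : s'.node ≠ s.node) (hmk : mk ≠ .C4) :
    s'.th = s.th ∧ (∃ ls r, s'.st = .arg ls r) ∧ ∀ ls r, s.st ≠ .arg ls r := by
  cases h
  case B1 | C2 => exact ⟨rfl, ⟨_, _, rfl⟩, fun _ _ h => nomatch h⟩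
  case C4 => exact absurd rfl hmk
  case C1 | C2f | C3 | C3f => exact absurd rfl hnode
  all_goals exact absurd ‹_› (hhead _)

theorem of_C4 (h : GMove T fc k s .C4 s') :
    ∃ l r, s.st = .val l r ∧ (∃ ls, s'.st = .arg ls r) ∧
      s'.xi = s.xi.updates (cUpd s.node l.stripLams.1 s.th k) := by
  cases h
  exact ⟨_, _, rfl, ⟨_, rfl⟩, rfl⟩

end GMove

namespace Play

variable {T : TTree} {P : DIProblem} (π : Play T P)

def ThetaProv (w : ℕ) (θ : Theta) : Prop :=
  ∀ y l ξ k, θ.look y = some (l, ξ, k) →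
    1 ≤ k ∧ k < w ∧ (∃ xs, T.labelAt? (π.pos k).node = some (.lam xs)) ∧ ξ = (π.pos k).xi

def XiProv (w : ℕ) (ξ : Xi) : Prop :=
  ∀ z n θ k, ξ.look z = some (n, θ, k) →
    1 ≤ k ∧ k < w ∧ θ = (π.pos k).th ∧ ∃ d, n = (π.pos k).node ++ [d]

variable {π}

theorem ThetaProv.mono {w w' : ℕ} {θ : Theta} (h : π.ThetaProv w θ) (hw : w ≤ w') :
    π.ThetaProv w' θ := fun y l ξ k hk =>
  let ⟨h1, h2, h3⟩ := h y l ξ k hk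
  ⟨h1, h2.trans_le hw, h3⟩

theorem XiProv.mono {w w' : ℕ} {ξ : Xi} (h : π.XiProv w ξ) (hw : w ≤ w') :
    π.XiProv w' ξ := fun z n θ k hk =>
  let ⟨h1, h2, h3⟩ := h z n θ k hk
  ⟨h1, h2.trans_le hw, h3⟩

variable (π)

theorem thetaProv_xiProv : ∀ w, 1 ≤ w → w ≤ π.len →
    π.ThetaProv w (π.pos w).th ∧ π.XiProv w (π.pos w).xi := by
  intro w
  induction w using Nat.strong_induction_on with
  | _ w IH =>
  intro h1w hw
  rcases h1w.eq_or_lt with rfl | hlt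
  · rw [π.init_th, π.init_xi]
    exact ⟨fun _ _ _ _ h => (nomatch h), fun _ _ _ _ h => (nomatch h)⟩
  obtain ⟨v, rfl⟩ : ∃ v, w = v + 1 := ⟨w - 1, by omega⟩
  have hstep := π.steps v (by omega) (by omega)
  obtain ⟨hT, hX⟩ := IH v (by omega) (by omega) (by omega)
  have hT' : π.ThetaProv (v + 1) (π.pos (v + 1)).th := by
    rcases hstep.th_cases with ⟨h, -⟩ | ⟨xs, ls, r, hlab, -, h, -⟩ | ⟨l, r, -, x, -, j, hlk⟩
    · rw [h]
      exact hT.mono (by omega)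
    · rw [h]
      intro y l ξ k hk
      rcases Theta.look_updates_aUpd hk with ⟨-, -, rfl, rfl⟩ | hold
      · exact ⟨by omega, by omega, ⟨xs, hlab⟩, rfl⟩
      · exact hT.mono (by omega) y l ξ k hold
    · rcases Xi.look_updates_cUpd hlk with ⟨h, -⟩ | hold
      · rw [h]
        exact hT.mono (by omega)
      · obtain ⟨h1k, hkv, h, -⟩ := hX x _ _ j hold
        rw [h]
        exact (IH j (by omega) h1k (by omega)).1.mono (by omega)
  refine ⟨hT', ?_⟩
  rcases hstep.xi_cases with h | ⟨zs, h⟩ | ⟨y, l, j, hlk⟩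
  · rw [h]
    exact hX.mono (by omega)
  · rw [h]
    intro z n θ k hk
    rcases Xi.look_updates_cUpd hk with ⟨rfl, rfl, d, rfl⟩ | hold
    · exact ⟨by omega, by omega, rfl, d, rfl⟩
    · exact hX.mono (by omega) z n θ k hold
  · obtain ⟨h1j, hj, -, h⟩ := hT' y l _ j hlk
    rw [h]
    exact (IH j (by omega) h1j (by omega)).2.mono hj.le

end Play

section Tiles

variable {T : TTree}

theorem TileValid.not_lam {p : List ℕ} {τ : Tile} (h : TileValid T p τ) (xs : List (ℕ × Ty)) :
    T.labelAt? p ≠ some (.lam xs) := by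
  obtain ⟨_, _, t, hat, hhead, -, -⟩ := h
  rw [TTree.labelAt?, hat]
  intro hlab
  rw [Option.some.inj hlab] at hhead
  exact hhead

theorem TileValid.sub {p : List ℕ} {subs : List (Option Tile)} {d : ℕ} {τ' : Tile}
    (h : TileValid T p (.mk subs)) (hd : subs[d]? = some (some τ')) :
    TileValid T (p ++ [d, 0]) τ' := by
  cases h with
  | mk _ _ _ _ _ _ hsubs => exact hsubs d τ' hd

theorem TileLeaf.tileLam {p q : List ℕ} {τ : Tile} (h : TileLeaf T p τ q) : TileLam T p τ q := by
  induction h with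
  | leaf p subs i hi => exact .lam p subs i (List.getElem?_eq_some_iff.mp hi).1
  | sub p subs i τ' q hi _ ih => exact .sub p subs i τ' q hi ih

theorem TileHead.prefix {p q : List ℕ} {τ : Tile} (h : TileHead T p τ q) : p <+: q := by
  induction h with
  | root => exact List.prefix_rfl
  | sub p subs i τ' q _ _ ih => exact (List.prefix_append p [i, 0]).trans ih

theorem TileLeaf.prefix {p q : List ℕ} {τ : Tile} (h : TileLeaf T p τ q) : p <+: q := by
  induction h with
  | leaf p subs i => exact List.prefix_append p [i]
  | sub p subs i τ' q _ _ ih => exact (List.prefix_append p [i, 0]).trans ih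

theorem eq_of_append_pair_prefix {p l : List ℕ} {i j : ℕ} (hi : p ++ [i, 0] <+: l)
    (hj : p ++ [j, 0] <+: l) : i = j := by
  have h := List.prefix_of_prefix_length_le hi hj (by simp)
  simpa using h.eq_of_length (by simp)

theorem TileLeaf.not_tileHead_append_zero {p q : List ℕ} {τ : Tile} (h : TileLeaf T p τ q) :
    ¬ TileHead T p τ (q ++ [0]) := by
  induction h with
  | leaf p subs i hi =>
    intro hh
    generalize hq : p ++ [i] ++ [0] = q' at hh
    cases hh with
    | root => simpa using congrArg List.length hq
    | sub _ _ j τ' _ hj hh =>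
      obtain rfl := eq_of_append_pair_prefix (i := i) (by simp [← hq]) hh.prefix
      simp [hi] at hj
  | sub p subs i τ' q hi hq ih =>
    intro hh
    generalize hq' : q ++ [0] = q' at hh
    have hiq : p ++ [i, 0] <+: q' := hq' ▸ hq.prefix.trans (List.prefix_append q [0])
    cases hh with
    | root => simpa using hiq.length_le
    | sub _ _ j τ'' _ hj hh =>
      obtain rfl := eq_of_append_pair_prefix hiq hh.prefix
      obtain rfl : τ' = τ'' := by simpa [hi] using hj
      exact ih (hq' ▸ hh)

theorem TileHead.eq_of_simpleTile {ν q : List ℕ} {t : TTree} (h : TileHead T ν t.simpleTile q) :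
    q = ν := by
  generalize hσ : t.simpleTile = σ at h
  cases h with
  | root => rfl
  | sub _ _ i _ _ hi =>
    rw [TTree.simpleTile, Tile.mk.injEq] at hσ
    simp [← hσ, List.getElem?_replicate] at hi

theorem basicTile_simpleTile_of_var {ν : List ℕ} {t : TTree} {y : ℕ} {B : Ty}
    (hat : T.at? ν = some t) (hlab : t.label = .var y B) :
    BasicTile T ν t.simpleTile ∧ TileFreeVarAt T ν t.simpleTile ν y := by
  have hlabAt : T.labelAt? ν = some (.var y B) := by rw [TTree.labelAt?, hat, ← hlab]; rfl
  have hfree : TileFreeVarAt T ν t.simpleTile ν y :=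
    ⟨.root _ _, ⟨B, hlabAt⟩, fun _ _ => by simp [TTree.bindersAlong]⟩
  refine ⟨⟨?_, .inl ⟨⟨ν, ⟨y, hfree⟩, fun q ⟨_, hq⟩ => hq.1.eq_of_simpleTile⟩, ?_⟩⟩, hfree⟩
  · refine .mk ν _ t hat (by rw [hlab]; trivial) (by simp) fun i _ hi => ?_
    simp [List.getElem?_replicate] at hi
  · rintro ⟨q, c, hq, A, hc⟩
    rw [hq.eq_of_simpleTile, hlabAt] at hc
    cases hc

theorem EndAt.not_tileBindsName_of_var_below {p q ν : List ℕ} {τ : Tile} {y : ℕ} {B : Ty}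
    (hend : EndAt T p τ q) (hpre : q <+: ν) (hne : q ≠ ν)
    (hlab : T.labelAt? ν = some (.var y B)) : ¬ TileBindsName T p τ y := by
  intro hbind
  obtain ⟨t, hat, ht⟩ := Option.map_eq_some_iff.mp hlab
  obtain ⟨hbasic, hfree⟩ := basicTile_simpleTile_of_var hat ht
  exact hend.2 ⟨ν, _, hbasic, ⟨hend.1, hpre, hne⟩, ν, y, hfree, hbind⟩

end Tiles

def AvoidsWindow (i m : ℕ) (l : Tm) (ξ : Xi) : Prop :=
  ∀ x ∈ l.varOcc, ∀ n θ k, ξ.look x = some (n, θ, k) → k < i ∨ m < k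

section AvoidsWindow

variable {i m : ℕ} {l l' : Tm} {ξ : Xi}

theorem avoidsWindow_of_varOcc_eq_empty (h : l.varOcc = ∅) : AvoidsWindow i m l ξ := by
  intro x hx
  rw [h] at hx
  exact absurd hx (Set.notMem_empty x)

theorem AvoidsWindow.mono (h : AvoidsWindow i m l ξ) (hl : l'.varOcc ⊆ l.varOcc) :
    AvoidsWindow i m l' ξ := fun x hx => h x (hl hx)

theorem AvoidsWindow.updates_cUpd (h : AvoidsWindow i m l ξ) {n : List ℕ} {zs : List (ℕ × Ty)}
    {θ : Theta} {w : ℕ} (hw : m < w) : AvoidsWindow i m l (ξ.updates (cUpd n zs θ w)) := by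
  intro x hx n' θ' k hk
  rcases Xi.look_updates_cUpd hk with ⟨-, rfl, -⟩ | hold
  · exact .inr hw
  · exact h x hx n' θ' k hold

end AvoidsWindow

def Theta.AvoidsWindowOff (i m : ℕ) (B : ℕ → Prop) (θ : Theta) : Prop :=
  ∀ y l ξ k, θ.look y = some (l, ξ, k) → B y ∨ AvoidsWindow i m l ξ

namespace Theta.AvoidsWindowOff

variable {i m : ℕ} {B B' : ℕ → Prop} {θ : Theta}

theorem mono (h : θ.AvoidsWindowOff i m B) (hB : ∀ y, B y → B' y) :
    θ.AvoidsWindowOff i m B' := fun y l ξ k hk => (h y l ξ k hk).imp_left (hB y)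

theorem updates_aUpd (h : θ.AvoidsWindowOff i m B) {xs : List (ℕ × Ty)} {ls : List Tm}
    {ξ : Xi} {w : ℕ} (hnew : (∀ y ∈ xs.map Prod.fst, B y) ∨ ∀ l ∈ ls, AvoidsWindow i m l ξ) :
    (θ.updates (aUpd xs ls ξ w)).AvoidsWindowOff i m B := by
  intro y l ξ₀ k hk
  rcases Theta.look_updates_aUpd hk with ⟨hy, hl, rfl, -⟩ | hold
  · exact hnew.imp (· y hy) (· l hl)
  · exact h y l ξ₀ k hold

end Theta.AvoidsWindowOff

namespace Play

variable {T : TTree} {P : DIProblem} {π : Play T P}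

theorem avoidsWindowOff_th_of_le (π : Play T P) {i m w : ℕ} (B : ℕ → Prop) (h1 : 1 ≤ w)
    (hwi : w ≤ i) (hw : w ≤ π.len) : (π.pos w).th.AvoidsWindowOff i m B := by
  intro y l ξ k hk
  obtain ⟨h1k, hkw, -, rfl⟩ := (π.thetaProv_xiProv w h1 hw).1 y l ξ k hk
  refine .inr fun x _ n θ k' hk' => .inl ?_
  have := ((π.thetaProv_xiProv k h1k (by omega)).2 x n θ k' hk').2.1
  omega

theorem child_of_head {a b d : ℕ} (hch : π.child b a)
    (hhead : ∀ xs, T.labelAt? (π.pos a).node ≠ some (.lam xs))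
    (hnode : (π.pos b).node = (π.pos a).node ++ [d]) :
    1 ≤ a ∧ (π.pos b).th = (π.pos a).th ∧ (∃ ls r, (π.pos b).st = .arg ls r) ∧
    ((b = a + 1 ∧ ∀ ls r, (π.pos a).st ≠ .arg ls r) ∨
     ∃ c l r, b = c + 1 ∧ (π.pos c).st = .val l r ∧ ∃ x ∈ l.varOcc, ∃ n θ,
       ((π.pos c).xi.updates (cUpd (π.pos c).node l.stripLams.1 (π.pos c).th c)).look x =
         some (n, θ, a)) := by
  obtain ⟨hab, hblen, hcase⟩ := hch
  rcases hcase with ⟨hmv, rfl⟩ | ⟨-, y, B, l, ξ, -, hlk⟩ | ⟨hmv, l, r, x, C, hst, hhd, hlk⟩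
  · obtain ⟨a, rfl⟩ : ∃ a, b = a + 1 := ⟨b - 1, by omega⟩
    rw [Nat.add_sub_cancel] at hhead hnode ⊢
    have h1a : 1 ≤ a := by
      by_contra h0
      obtain rfl : a = 0 := by omega
      simp [π.init_node] at hnode
    have hmk : π.mv (a + 1) ≠ .C4 := by rcases hmv with h | h | h | h <;> rw [h] <;> simp
    obtain ⟨hth, harg, hnarg⟩ :=
      (π.steps a h1a (by omega)).of_head hhead (by simp [hnode]) hmk
    exact ⟨h1a, hth, harg, .inl ⟨rfl, hnarg⟩⟩
  · obtain ⟨-, -, ⟨xs, hxs⟩, -⟩ := (π.thetaProv_xiProv b (by omega) hblen.le).1 y l ξ a hlk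
    exact absurd hxs (hhead xs)
  · obtain ⟨h1a, -, hth, -⟩ := (π.thetaProv_xiProv b (by omega) hblen.le).2 x _ _ a hlk
    obtain ⟨c, rfl⟩ : ∃ c, b = c + 1 := ⟨b - 1, by omega⟩
    rw [Nat.add_sub_cancel] at hst
    have hstep := π.steps c (by omega) (by omega)
    rw [hmv] at hstep
    obtain ⟨l', r', hst', ⟨ws, harg⟩, hxi⟩ := hstep.of_C4
    obtain ⟨rfl, rfl⟩ : l = l' ∧ r = r' := by simpa [hst] using hst'
    refine ⟨h1a, hth, ⟨ws, r, harg⟩, .inr ⟨c, l, r, rfl, hst, x, ?_, _, _, hxi ▸ hlk⟩⟩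
    exact Tm.varOcc_stripLams_snd_subset _ (Tm.mem_varOcc_of_headArgs_fst_eq hhd)

/-- `TilePlayOn` with its list of cuts forgotten. -/
inductive TilePlay (π : Play T P) : List ℕ → Tile → ℕ → ℕ → List ℕ → Prop
  | leaf (p : List ℕ) (subs : List (Option Tile)) (d a b : ℕ) :
      subs[d]? = some none → (π.pos a).node = p → (π.pos b).node = p ++ [d] → π.child b a →
      TilePlay π p (.mk subs) a b (p ++ [d])
  | sub (p : List ℕ) (subs : List (Option Tile)) (d a b e : ℕ) (τ' : Tile) (q : List ℕ) :
      subs[d]? = some (some τ') → (π.pos a).node = p → (π.pos b).node = p ++ [d] →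
      π.child b a → TilePlay π (p ++ [d, 0]) τ' (b + 1) e q → TilePlay π p (.mk subs) a e q

theorem TilePlayCuts.tilePlay {p q : List ℕ} {τ : Tile} {cuts : List (ℕ × ℕ)}
    (h : π.TilePlayCuts p τ cuts q) :
    ∀ x y, cuts.head? = some x → cuts.getLast? = some y → π.TilePlay p τ x.1 y.2 q := by
  induction h with
  | simple p subs d a b hd ha hb hch =>
    rintro x y ⟨⟩ ⟨⟩
    exact .leaf p subs d a b hd ha hb hch
  | step p subs d a b _ _ q τ' hd ha hb hch _ ih =>
    rintro x y ⟨⟩ hy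
    rw [List.getLast?_cons_cons] at hy
    exact .sub p subs d a b y.2 τ' q hd ha hb hch (ih _ y rfl hy)

theorem TilePlayOn.tilePlay {p q : List ℕ} {τ : Tile} {i j : ℕ} (h : π.TilePlayOn p τ i j q) :
    π.TilePlay p τ i j q := by
  obtain ⟨cuts, x, y, hcuts, hx, rfl, hy, rfl⟩ := h
  exact hcuts.tilePlay x y hx hy

theorem TilePlay.endpoints {p q : List ℕ} {τ : Tile} {a e : ℕ} (h : π.TilePlay p τ a e q)
    (hτ : TileValid T p τ) :
    1 ≤ a ∧ a < e ∧ e < π.len ∧ (π.pos e).node = q ∧ ∃ ls r, (π.pos e).st = .arg ls r := by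
  induction h with
  | leaf p subs d a b _ ha hb hch =>
    obtain ⟨h1a, -, harg, -⟩ := π.child_of_head hch (ha ▸ hτ.not_lam) (ha ▸ hb)
    exact ⟨h1a, hch.1, hch.2.1, hb, harg⟩
  | sub p subs d a b e τ' q hd ha hb hch _ ih =>
    obtain ⟨h1a, -⟩ := π.child_of_head hch (ha ▸ hτ.not_lam) (ha ▸ hb)
    obtain ⟨-, hbe, he⟩ := ih (hτ.sub hd)
    exact ⟨h1a, by have := hch.1; omega, he⟩

theorem TilePlay.avoidsWindowOff_end {p₀ p q : List ℕ} {τ₀ τ : Tile} {a e i m : ℕ}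
    (h : π.TilePlay p τ a e q) (hτ : TileValid T p τ)
    (hsub : ∀ ν, TileLam T p τ ν → TileLam T p₀ τ₀ ν)
    (ha : (π.pos a).th.AvoidsWindowOff i m (TileBindsName T p₀ τ₀)) :
    (π.pos e).th.AvoidsWindowOff i m (TileBindsName T p₀ τ₀) := by
  induction h with
  | leaf p subs d a b _ ha' hb hch =>
    rw [(π.child_of_head hch (ha' ▸ hτ.not_lam) (ha' ▸ hb)).2.1]
    exact ha
  | sub p subs d a b e τ' q hd ha' hb hch hrest ih =>
    obtain ⟨-, hth, ⟨ls, r, harg⟩, -⟩ := π.child_of_head hch (ha' ▸ hτ.not_lam) (ha' ▸ hb)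
    obtain ⟨-, hbe, hel, -⟩ := hrest.endpoints (hτ.sub hd)
    obtain ⟨xs, hlab, hth'⟩ := (π.steps b (by have := hch.1; omega) (by omega)).of_arg harg
    refine ih (hτ.sub hd) (fun ν hν => hsub ν (.sub p subs d τ' ν hd hν)) ?_
    rw [hth', hth]
    have hd' := (List.getElem?_eq_some_iff.mp hd).1
    exact ha.updates_aUpd
      (.inl fun y hy => ⟨p ++ [d], xs, hsub _ (.lam p subs d hd'), hb ▸ hlab, hy⟩)

def WindowInv (π : Play T P) (p : List ℕ) (τ : Tile) (q : List ℕ) (i m w : ℕ) : Prop :=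
  (π.pos w).th.AvoidsWindowOff i m (fun y => TileBindsName T p τ y ∧ q <+: (π.pos w).node) ∧
  (m < w → ∀ l ∈ (π.pos w).st.lefts, AvoidsWindow i m l (π.pos w).xi)

theorem lt_of_st_val {m v : ℕ} (hargm : ∃ ls r, (π.pos m).st = .arg ls r) (hmv : m ≤ v)
    {l r : Tm} (hst : (π.pos v).st = .val l r) : m < v := by
  refine hmv.lt_of_ne ?_
  rintro rfl
  obtain ⟨_, _, h⟩ := hargm
  simp [h] at hst

theorem windowInv_th_succ {p q : List ℕ} {τ : Tile} {i m v : ℕ} (hq : TileLam T p τ q)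
    (hnodem : (π.pos m).node = q) (hargm : ∃ ls r, (π.pos m).st = .arg ls r)
    (h1v : 1 ≤ v) (hmv : m ≤ v) (hv : v < π.len)
    (IH : ∀ k, m ≤ k → k ≤ v → π.WindowInv p τ q i m k) :
    (π.pos (v + 1)).th.AvoidsWindowOff i m
      (fun y => TileBindsName T p τ y ∧ q <+: (π.pos (v + 1)).node) := by
  obtain ⟨hth, hlefts⟩ := IH v hmv le_rfl
  rcases (π.steps v h1v hv).th_cases with ⟨h, hpre⟩ | ⟨xs, ls, r, hlab, hst, h, hnode⟩ |
      ⟨l, r, hst, x, hx, j, hlk⟩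
  · rw [h]
    exact hth.mono fun y ⟨hy, hqy⟩ => ⟨hy, hqy.trans hpre⟩
  · rw [h, hnode]
    refine (hth.mono fun y ⟨hy, hqy⟩ => ⟨hy, hqy.trans (List.prefix_append _ _)⟩).updates_aUpd ?_
    rcases hmv.eq_or_lt with rfl | hlt
    · exact .inl fun y hy => ⟨⟨q, xs, hq, hnodem ▸ hlab, hy⟩, hnodem ▸ List.prefix_append _ _⟩
    · exact .inr fun l hl => hlefts hlt l (by simpa [hst, GState.lefts] using hl)
  · have hmv' := π.lt_of_st_val hargm hmv hst
    rcases Xi.look_updates_cUpd hlk with ⟨h, -, d, hd⟩ | hold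
    · rw [h]
      exact hth.mono fun y ⟨hy, hqy⟩ => ⟨hy, hd ▸ hqy.trans (List.prefix_append _ _)⟩
    · obtain ⟨h1k, hkv, h, d, hd⟩ := (π.thetaProv_xiProv v h1v hv.le).2 x _ _ j hold
      rw [h]
      rcases hlefts hmv' l (by simp [hst, GState.lefts]) x hx _ _ _ hold with hki | hmk
      · exact π.avoidsWindowOff_th_of_le _ h1k hki.le (by omega)
      · exact (IH j hmk.le hkv.le).1.mono fun y ⟨hy, hqy⟩ =>
          ⟨hy, hd ▸ hqy.trans (List.prefix_append _ _)⟩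

theorem windowInv_lefts_succ {p q : List ℕ} {τ : Tile} {i m v : ℕ} (hend : EndAt T p τ q)
    {xs : List (ℕ × Ty)} (hqlab : T.labelAt? q = some (.lam xs))
    (hargm : ∃ ls r, (π.pos m).st = .arg ls r)
    (h1v : 1 ≤ v) (hmv : m ≤ v) (hv : v < π.len) (hinv : π.WindowInv p τ q i m v)
    (hth : (π.pos (v + 1)).th.AvoidsWindowOff i m
      (fun y => TileBindsName T p τ y ∧ q <+: (π.pos (v + 1)).node)) :
    ∀ l ∈ (π.pos (v + 1)).st.lefts, AvoidsWindow i m l (π.pos (v + 1)).xi := by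
  intro l' hl'
  rcases (π.steps v h1v hv).lefts_cases hl' with h | ⟨y, B, j, hlab, hlk⟩ |
      ⟨l, r, hst, hsub, hxi⟩
  · exact avoidsWindow_of_varOcc_eq_empty h
  · refine (hth y _ _ j hlk).resolve_left fun ⟨hy, hqy⟩ =>
      hend.not_tileBindsName_of_var_below hqy ?_ hlab hy
    -- `q` is labelled by a λ, the looked-up variable labels `π(v + 1)`
    rintro rfl
    rw [hqlab] at hlab
    cases hlab
  · have hmv' := π.lt_of_st_val hargm hmv hst
    rw [hxi]
    exact ((hinv.2 hmv' l (by simp [hst, GState.lefts])).mono hsub).updates_cUpd hmv'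

theorem windowInv {p q : List ℕ} {τ : Tile} {i m : ℕ} (hend : EndAt T p τ q)
    (h1m : 1 ≤ m) (hmlen : m < π.len) (hnodem : (π.pos m).node = q)
    (hargm : ∃ ls r, (π.pos m).st = .arg ls r)
    (hokm : (π.pos m).th.AvoidsWindowOff i m (TileBindsName T p τ)) :
    ∀ w, m ≤ w → w ≤ π.len → π.WindowInv p τ q i m w := by
  have ⟨_, _, harg⟩ := hargm
  obtain ⟨xs, hqlab, -⟩ := (π.steps m h1m hmlen).of_arg harg
  rw [hnodem] at hqlab
  intro w
  induction w using Nat.strong_induction_on with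
  | _ w IH =>
  intro hmw hw
  rcases hmw.eq_or_lt with rfl | hlt
  · exact ⟨hokm.mono fun y hy => ⟨hy, hnodem ▸ List.prefix_rfl⟩, fun h => absurd h (lt_irrefl _)⟩
  obtain ⟨v, rfl⟩ : ∃ v, w = v + 1 := ⟨w - 1, by omega⟩
  have hth := π.windowInv_th_succ (v := v) hend.1.tileLam hnodem hargm (by omega) (by omega)
    (by omega) fun k hk hkv => IH k (by omega) hk (by omega)
  exact ⟨hth, fun _ => π.windowInv_lefts_succ hend hqlab hargm (by omega) (by omega) (by omega)
    (IH v (by omega) (by omega) (by omega)) hth⟩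

theorem child_le_of_windowInv {p q : List ℕ} {τ : Tile} {i m a b d : ℕ}
    (hinv : ∀ w, m ≤ w → w ≤ π.len → π.WindowInv p τ q i m w)
    (hargm : ∃ ls r, (π.pos m).st = .arg ls r)
    (hch : π.child b a) (hhead : ∀ xs, T.labelAt? (π.pos a).node ≠ some (.lam xs))
    (hnode : (π.pos b).node = (π.pos a).node ++ [d]) (hia : i ≤ a) (ham : a ≤ m) : b ≤ m := by
  by_contra! hmb
  rcases (π.child_of_head hch hhead hnode).2.2.2 with ⟨rfl, hnarg⟩ |
      ⟨c, l, r, rfl, hst, x, hx, n, θ, hlk⟩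
  · obtain rfl : a = m := by omega
    obtain ⟨ls, r, harg⟩ := hargm
    exact hnarg ls r harg
  · have hmc := π.lt_of_st_val hargm (by omega) hst
    have havoid :=
      (hinv c hmc.le (by have := hch.2.1; omega)).2 hmc l (by simp [hst, GState.lefts])
    rcases havoid.updates_cUpd hmc x hx n θ a hlk with h | h <;> omega

theorem TilePlay.le_of_windowInv {p q p₂ q₂ : List ℕ} {τ τ₂ : Tile} {i m a e : ℕ}
    (h : π.TilePlay p₂ τ₂ a e q₂) (hτ : TileValid T p₂ τ₂)
    (hq : ¬ TileHead T p₂ τ₂ (q ++ [0])) (hia : i ≤ a) (ham : a ≤ m)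
    (hinv : ∀ w, m ≤ w → w ≤ π.len → π.WindowInv p τ q i m w)
    (hnodem : (π.pos m).node = q) (hargm : ∃ ls r, (π.pos m).st = .arg ls r) : e ≤ m := by
  induction h with
  | leaf p₂ subs d a b _ ha hb hch =>
    exact π.child_le_of_windowInv hinv hargm hch (ha ▸ hτ.not_lam) (ha ▸ hb) hia ham
  | sub p₂ subs d a b e τ' q₂ hd ha hb hch _ ih =>
    have hbm := π.child_le_of_windowInv hinv hargm hch (ha ▸ hτ.not_lam) (ha ▸ hb) hia ham
    rcases hbm.eq_or_lt with rfl | hbm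
    · have hroot : TileHead T (p₂ ++ [d, 0]) τ' (p₂ ++ [d, 0]) := by cases τ'; exact .root _ _
      exact (hq (by simpa [← hnodem, hb] using TileHead.sub p₂ subs d τ' _ hd hroot)).elim
    · exact ih (hτ.sub hd) (fun h' => hq (.sub p₂ subs d τ' _ hd h')) (by have := hch.1; omega) hbm

end Play

theorem end_tile_unique_play {T : TTree} {P : DIProblem} (π : Play T P)
    (p q : List ℕ) (τ : Tile)
    (hb : BasicTile T p τ) (hend : EndAt T p τ q)
    (i m n : ℕ) (hm : π.TilePlayOn p τ i m q)
    (hn : ∃ q', π.TilePlayOn p τ i n q') (hge : m ≤ n) :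
    n = m := by
  have hplay := hm.tilePlay
  obtain ⟨h1i, him, hmlen, hnodem, hargm⟩ := hplay.endpoints hb.1
  have hokm := hplay.avoidsWindowOff_end hb.1 (fun _ h => h)
    (π.avoidsWindowOff_th_of_le (m := m) _ h1i le_rfl (by omega))
  have hinv := π.windowInv hend (by omega) hmlen hnodem hargm hokm
  obtain ⟨q', hn⟩ := hn
  have hnm := hn.tilePlay.le_of_windowInv hb.1 hend.1.not_tileHead_append_zero le_rfl him.le
    hinv hnodem hargm
  omega
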